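/- arXiv:0711.0592 — 2 statements merged into one kernel-verified Lean document; each statement's English description precedes it below -/
import Mathlib

section
/- Let A be a real n×n matrix, B a real n×1 matrix, C a real 1×n matrix, and φ : ℝ → ℝ Lipschitz continuous with constant L ≥ 0. Suppose there exist a real symmetric positive-definite n×n matrix P, μ > 0, and K ∈ ℝ such that P(A − BKC) + (A − BKC)ᵀP ≤ −μP (as quadratic forms) and PB = Cᵀ. Let ȳ₁ : ℝ → ℝ and Δ ≥ 0 satisfy |C x(t) − ȳ₁(t)| ≤ Δ for all t ≥ 0, where x : ℝ → ℝⁿ solves the master system ẋ = A x + B φ(C x), and let z : ℝ → ℝⁿ solve the slave system ż = A z + B φ(C z) + B u with controller u(t) = −(K + L)·(C z(t) − ȳ₁(t)). Then the limit synchronization error satisfies limsup_{t→∞} ‖z(t) − x(t)‖ ≤ 2(|K| + L)·Δ·√(Bᵀ P B) / (μ·√(λ_min(P))), where λ_min(P) is the smallest eigenvalue of P and ‖·‖ is the Euclidean norm. In particular, the upper bound on the limit synchronization error is proportional to the upper bound Δ on the transmission error. -/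
/-! The error `e = z - x` obeys `ė = (A - KBC)e + ξB`, where the scalar `ξ` collects the mismatch
of the nonlinearities, the `L`-part of the gain and the transmission error. For `V = eᵀPe` the
passification relations give `V̇ ≤ -μV + 2ξ·Ce`; the Lipschitz bound on `φ` and `|δ| ≤ Δ` give
`ξ·Ce ≤ (|K| + L)Δ|Ce|`, and Cauchy–Schwarz for `P` gives `|Ce| = |eᵀPB| ≤ √V·√(BᵀPB)`.
Absorbing the resulting `c√V`, `c = 2(|K| + L)Δ√(BᵀPB)`, by AM-GM leaves
`V̇ ≤ -(μ/2)V + c²/(2μ)`, so by Grönwall `limsup V ≤ (c/μ)²`, and `λ_min(P)‖e‖² ≤ V` turns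
this into the Euclidean bound. -/

open Matrix Filter Topology

section Calculus

variable {𝕜 ι : Type*} [NontriviallyNormedField 𝕜] [Fintype ι] {f g : 𝕜 → ι → 𝕜}
  {f' g' : ι → 𝕜} {t : 𝕜}

theorem HasDerivAt.dotProduct (hf : HasDerivAt f f' t) (hg : HasDerivAt g g' t) :
    HasDerivAt (fun s => f s ⬝ᵥ g s) (f' ⬝ᵥ g t + f t ⬝ᵥ g') t := by
  have h : HasDerivAt (fun s => ∑ i, f s i * g s i) (∑ i, (f' i * g t i + f t i * g' i)) t :=
    HasDerivAt.fun_sum fun i _ => (hasDerivAt_pi.1 hf i).mul (hasDerivAt_pi.1 hg i)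
  rwa [Finset.sum_add_distrib] at h

theorem HasDerivAt.mulVec (A : Matrix ι ι 𝕜) (hf : HasDerivAt f f' t) :
    HasDerivAt (fun s => A *ᵥ f s) (A *ᵥ f') t :=
  hasDerivAt_pi.2 fun i => HasDerivAt.fun_sum fun j _ => (hasDerivAt_pi.1 hf j).const_mul (A i j)

end Calculus

theorem sector_forcing_mul_le {p d δ L K Δ : ℝ} (hL : 0 ≤ L) (hp : |p| ≤ L * |d|)
    (hδ : |δ| ≤ Δ) : (p - L * d - (K + L) * δ) * d ≤ (|K| + L) * Δ * |d| := by
  have hpd : p * d ≤ L * d ^ 2 := by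
    rw [← sq_abs d, sq]
    calc p * d ≤ |p| * |d| := by rw [← abs_mul]; exact le_abs_self _
      _ ≤ L * |d| * |d| := by gcongr
      _ = L * (|d| * |d|) := mul_assoc _ _ _
  have hδd : -((K + L) * δ * d) ≤ (|K| + L) * Δ * |d| := by
    calc -((K + L) * δ * d) ≤ |K + L| * |δ| * |d| := by
          rw [← abs_mul, ← abs_mul]; exact neg_le_abs _
      _ ≤ (|K| + L) * Δ * |d| := by
          gcongr
          exact (abs_add_le K L).trans_eq (by rw [abs_of_nonneg hL])
  linarith

theorem mul_sqrt_le_half_mul_add_sq_div {μ c V : ℝ} (hμ : 0 < μ) (hV : 0 ≤ V) :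
    c * √V ≤ μ / 2 * V + c ^ 2 / (2 * μ) := by
  have hsq : μ / 2 * V + c ^ 2 / (2 * μ) - c * √V = (μ * √V - c) ^ 2 / (2 * μ) := by
    field_simp
    rw [sub_sq, mul_pow, Real.sq_sqrt hV]
    ring
  have : 0 ≤ (μ * √V - c) ^ 2 / (2 * μ) := by positivity
  linarith

section QuadraticForm

variable {ι : Type*} [Fintype ι]

theorem Matrix.IsHermitian.dotProduct_mulVec_comm {P : Matrix ι ι ℝ} (hP : P.IsHermitian)
    (u v : ι → ℝ) :
    u ⬝ᵥ P *ᵥ v = v ⬝ᵥ P *ᵥ u := by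
  rw [dotProduct_mulVec, ← mulVec_transpose, ← conjTranspose_eq_transpose_of_trivial, hP.eq,
    dotProduct_comm]

theorem HasDerivAt.dotProduct_mulVec_self {P : Matrix ι ι ℝ} {e : ℝ → ι → ℝ} {e' : ι → ℝ}
    {t : ℝ} (he : HasDerivAt e e' t) (hP : P.IsHermitian) :
    HasDerivAt (fun s => e s ⬝ᵥ P *ᵥ e s) (2 * (e t ⬝ᵥ P *ᵥ e')) t := by
  convert he.dotProduct (he.mulVec P) using 1
  · rfl
  rw [hP.dotProduct_mulVec_comm e']
  ring

theorem Matrix.PosSemidef.abs_dotProduct_mulVec_le {P : Matrix ι ι ℝ} (hP : P.PosSemidef)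
    (u v : ι → ℝ) :
    |u ⬝ᵥ P *ᵥ v| ≤ √(u ⬝ᵥ P *ᵥ u) * √(v ⬝ᵥ P *ᵥ v) := by
  have hquad : ∀ s : ℝ, 0 ≤ (v ⬝ᵥ P *ᵥ v) * (s * s) + 2 * (u ⬝ᵥ P *ᵥ v) * s
      + u ⬝ᵥ P *ᵥ u := fun s => by
    have := hP.dotProduct_mulVec_nonneg (u + s • v)
    simp only [star_trivial, mulVec_add, mulVec_smul, add_dotProduct, dotProduct_add,
      smul_dotProduct, dotProduct_smul, smul_eq_mul, hP.1.dotProduct_mulVec_comm v u] at this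
    linarith
  have hdisc := discrim_le_zero hquad
  rw [discrim] at hdisc
  rw [← Real.sqrt_mul (by simpa using hP.dotProduct_mulVec_nonneg u)]
  exact Real.abs_le_sqrt (by nlinarith)

theorem Matrix.IsHermitian.iInf_eigenvalues_mul_sum_sq_le [DecidableEq ι] {P : Matrix ι ι ℝ}
    (hP : P.IsHermitian) (v : ι → ℝ) :
    (⨅ i, hP.eigenvalues i) * ∑ i, v i ^ 2 ≤ v ⬝ᵥ P *ᵥ v := by
  set U : Matrix ι ι ℝ := (hP.eigenvectorUnitary : Matrix ι ι ℝ)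
  set w : ι → ℝ := star U *ᵥ v with hw
  have hstar : star U = Uᵀ := conjTranspose_eq_transpose_of_trivial U
  have hquad : v ⬝ᵥ P *ᵥ v = ∑ i, hP.eigenvalues i * w i ^ 2 := by
    conv_lhs => rw [hP.spectral_theorem, Unitary.conjStarAlgAut_apply]
    rw [← mulVec_mulVec, ← mulVec_mulVec, dotProduct_mulVec, ← mulVec_transpose, ← hstar, ← hw]
    simp [dotProduct, mulVec_diagonal, sq, mul_left_comm]
  have hnorm : ∑ i, v i ^ 2 = ∑ i, w i ^ 2 := by
    have hUU : U * star U = 1 := mem_unitaryGroup_iff.mp hP.eigenvectorUnitary.2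
    have : w ⬝ᵥ w = v ⬝ᵥ v := by
      rw [hw, hstar, mulVec_transpose, ← dotProduct_mulVec, ← mulVec_transpose,
        mulVec_mulVec, ← hstar, hUU, one_mulVec]
    simpa [dotProduct, sq] using this.symm
  rw [hquad, hnorm, Finset.mul_sum]
  gcongr with i
  exact ciInf_le (Finite.bddBelow_range _) i

theorem Matrix.PosDef.sum_sq_le_div_iInf_eigenvalues [DecidableEq ι] {P : Matrix ι ι ℝ}
    (hP : P.PosDef) (v : ι → ℝ) :
    ∑ i, v i ^ 2 ≤ (v ⬝ᵥ P *ᵥ v) / ⨅ i, hP.1.eigenvalues i := by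
  rcases isEmpty_or_nonempty ι with hι | hι
  · simp
  obtain ⟨i, hi⟩ := exists_eq_ciInf_of_finite (f := hP.1.eigenvalues)
  rw [le_div_iff₀ (hi ▸ hP.eigenvalues_pos i), mul_comm]
  exact hP.1.iInf_eigenvalues_mul_sum_sq_le v

theorem two_mul_dotProduct_mulVec_le_of_forcing {P M : Matrix ι ι ℝ} {B C : ι → ℝ} {μ ξ β : ℝ}
    (hP : P.PosSemidef) (hμ : 0 < μ)
    (hLyap : ∀ v, v ⬝ᵥ (P * M + Mᵀ * P) *ᵥ v ≤ -μ * (v ⬝ᵥ P *ᵥ v)) (hPB : P *ᵥ B = C)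
    {v : ι → ℝ} (hξ : ξ * (C ⬝ᵥ v) ≤ β * |C ⬝ᵥ v|) (hβ : 0 ≤ β) :
    2 * (v ⬝ᵥ P *ᵥ (M *ᵥ v + ξ • B))
      ≤ -(μ / 2) * (v ⬝ᵥ P *ᵥ v) + (2 * β * √(B ⬝ᵥ P *ᵥ B)) ^ 2 / (2 * μ) := by
  have hV : 0 ≤ v ⬝ᵥ P *ᵥ v := by simpa using hP.dotProduct_mulVec_nonneg v
  have hsplit : 2 * (v ⬝ᵥ P *ᵥ (M *ᵥ v + ξ • B))
      = v ⬝ᵥ (P * M + Mᵀ * P) *ᵥ v + 2 * ξ * (C ⬝ᵥ v) := by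
    rw [add_mulVec, ← mulVec_mulVec, ← mulVec_mulVec, dotProduct_add, dotProduct_mulVec v Mᵀ,
      vecMul_transpose, hP.1.dotProduct_mulVec_comm (M *ᵥ v), mulVec_add, mulVec_smul, hPB,
      dotProduct_add, dotProduct_smul, smul_eq_mul, dotProduct_comm v C]
    ring
  have hCS : |C ⬝ᵥ v| ≤ √(v ⬝ᵥ P *ᵥ v) * √(B ⬝ᵥ P *ᵥ B) := by
    simpa only [hPB, dotProduct_comm v C] using hP.abs_dotProduct_mulVec_le v B
  calc 2 * (v ⬝ᵥ P *ᵥ (M *ᵥ v + ξ • B))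
      ≤ -μ * (v ⬝ᵥ P *ᵥ v) + 2 * β * √(B ⬝ᵥ P *ᵥ B) * √(v ⬝ᵥ P *ᵥ v) := by
        rw [hsplit]
        nlinarith [hLyap v, mul_le_mul_of_nonneg_left hCS hβ]
    _ ≤ _ := by linarith [mul_sqrt_le_half_mul_add_sq_div (c := 2 * β * √(B ⬝ᵥ P *ᵥ B)) hμ hV]

theorem hasDerivAt_sync_error {A : Matrix ι ι ℝ} {B C : ι → ℝ}
    {φ : ℝ → ℝ} {K L : ℝ} {ybar : ℝ → ℝ} {x z : ℝ → ι → ℝ} {t : ℝ}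
    (hx : HasDerivAt x (A *ᵥ x t + φ (C ⬝ᵥ x t) • B) t)
    (hz : HasDerivAt z
      (A *ᵥ z t + φ (C ⬝ᵥ z t) • B + (-((K + L) * (C ⬝ᵥ z t - ybar t))) • B) t) :
    HasDerivAt (fun s => z s - x s)
      ((A - K • vecMulVec B C) *ᵥ (z t - x t) + (φ (C ⬝ᵥ z t) - φ (C ⬝ᵥ x t)
        - L * (C ⬝ᵥ (z t - x t)) - (K + L) * (C ⬝ᵥ x t - ybar t)) • B) t := by
  refine (hz.sub hx).congr_deriv ?_
  ext i
  simp only [sub_mulVec, smul_mulVec, vecMulVec_mulVec, mulVec_sub, dotProduct_sub, Pi.add_apply,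
    Pi.sub_apply, Pi.smul_apply, smul_eq_mul, MulOpposite.smul_eq_mul_unop, MulOpposite.unop_op]
  ring

end QuadraticForm

theorem le_gronwallBound_of_hasDerivAt {f f' : ℝ → ℝ} {K ε a : ℝ}
    (hf : ∀ t, HasDerivAt f (f' t) t) (bound : ∀ t ≥ a, f' t ≤ K * f t + ε) {t : ℝ}
    (ht : a ≤ t) : f t ≤ gronwallBound (f a) K ε (t - a) :=
  le_gronwallBound_of_liminf_deriv_right_le
    (continuous_iff_continuousAt.2 fun s => (hf s).continuousAt).continuousOn
    (fun s _ _ hr => (hf s).hasDerivWithinAt.liminf_right_slope_le hr) le_rfl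
    (fun s hs => bound s hs.1) t ⟨ht, le_rfl⟩

theorem tendsto_gronwallBound_atTop {δ K ε : ℝ} (hK : K < 0) :
    Tendsto (gronwallBound δ K ε) atTop (𝓝 (-ε / K)) := by
  have hexp : Tendsto (fun t => Real.exp (K * t)) atTop (𝓝 0) :=
    Real.tendsto_exp_atBot.comp (tendsto_id.const_mul_atTop_of_neg hK)
  rw [gronwallBound_of_K_ne_0 hK.ne]
  convert (hexp.const_mul δ).add ((hexp.sub_const 1).const_mul (ε / K)) using 2
  ring

theorem Filter.limsup_le_of_eventually_le_of_tendsto {α β : Type*}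
    [ConditionallyCompleteLinearOrder β] [TopologicalSpace β] [OrderTopology β] {l : Filter α}
    [l.NeBot] {f g : α → β} {b : β} (hf : IsCoboundedUnder (· ≤ ·) l f) (hfg : f ≤ᶠ[l] g)
    (hg : Tendsto g l (𝓝 b)) : limsup f l ≤ b :=
  (limsup_le_limsup hfg hf hg.isBoundedUnder_le).trans hg.limsup_eq.le

theorem controlled_sync_limit_error_bound_general {n : ℕ}
    (A : Matrix (Fin n) (Fin n) ℝ) (B C : Fin n → ℝ)
    (φ : ℝ → ℝ) (L : ℝ) (hL : 0 ≤ L)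
    (hφ : ∀ y y' : ℝ, |φ y - φ y'| ≤ L * |y - y'|)
    (P : Matrix (Fin n) (Fin n) ℝ) (μ K : ℝ)
    (hP : P.PosDef) (hμ : 0 < μ)
    (hLyap : ∀ v : Fin n → ℝ,
      v ⬝ᵥ (P * (A - K • vecMulVec B C) + (A - K • vecMulVec B C)ᵀ * P).mulVec v
        ≤ -μ * (v ⬝ᵥ P.mulVec v))
    (hPB : P.mulVec B = C)
    (ybar : ℝ → ℝ) (Δ : ℝ)
    (x z : ℝ → Fin n → ℝ)
    (hx : ∀ t : ℝ, HasDerivAt x (A.mulVec (x t) + φ (C ⬝ᵥ x t) • B) t)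
    (hδ : ∀ t ≥ (0 : ℝ), |C ⬝ᵥ x t - ybar t| ≤ Δ)
    (hz : ∀ t : ℝ, HasDerivAt z
      (A.mulVec (z t) + φ (C ⬝ᵥ z t) • B
        + (-((K + L) * (C ⬝ᵥ z t - ybar t))) • B) t) :
    limsup (fun t => Real.sqrt (∑ i, (z t i - x t i) ^ 2)) atTop
      ≤ 2 * (|K| + L) * Δ * Real.sqrt (B ⬝ᵥ P.mulVec B)
        / (μ * Real.sqrt (⨅ i, hP.1.eigenvalues i)) := by
  have hΔ : 0 ≤ Δ := (abs_nonneg _).trans (hδ 0 le_rfl)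
  set V : ℝ → ℝ := fun t => (z t - x t) ⬝ᵥ P *ᵥ (z t - x t)
  set β := (|K| + L) * Δ
  set ε := (2 * β * √(B ⬝ᵥ P *ᵥ B)) ^ 2 / (2 * μ) with hε_def
  set lam := ⨅ i, hP.1.eigenvalues i
  have hV := fun t => (hasDerivAt_sync_error (hx t) (hz t)).dotProduct_mulVec_self hP.1
  have hV' : ∀ t ≥ 0, _ ≤ -(μ / 2) * V t + ε := fun t ht => by
    have hφt : |φ (C ⬝ᵥ z t) - φ (C ⬝ᵥ x t)| ≤ L * |C ⬝ᵥ (z t - x t)| := by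
      rw [dotProduct_sub]
      exact hφ _ _
    exact two_mul_dotProduct_mulVec_le_of_forcing hP.posSemidef hμ hLyap hPB
      (sector_forcing_mul_le hL hφt (hδ t ht)) (by positivity)
  have hlam : 0 ≤ lam := Real.iInf_nonneg fun i => (hP.eigenvalues_pos i).le
  have hbound : ∀ t ≥ 0, √(∑ i, (z t i - x t i) ^ 2)
      ≤ √(gronwallBound (V 0) (-(μ / 2)) ε t / lam) := fun t ht => by
    have hVt := le_gronwallBound_of_hasDerivAt (f := V) hV hV' ht
    rw [sub_zero] at hVt
    exact Real.sqrt_le_sqrt ((hP.sum_sq_le_div_iInf_eigenvalues (z t - x t)).trans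
      (div_le_div_of_nonneg_right hVt hlam))
  calc limsup (fun t => √(∑ i, (z t i - x t i) ^ 2)) atTop
      ≤ √(-ε / -(μ / 2) / lam) :=
        limsup_le_of_eventually_le_of_tendsto
          (isCoboundedUnder_le_of_le atTop fun t => Real.sqrt_nonneg _)
          ((eventually_ge_atTop 0).mono hbound)
          ((tendsto_gronwallBound_atTop (by linarith)).div_const lam).sqrt
    _ = _ := by
        have hε : -ε / -(μ / 2) = (2 * β * √(B ⬝ᵥ P *ᵥ B) / μ) ^ 2 := by
          rw [hε_def]
          field_simp
        rw [hε, Real.sqrt_div (sq_nonneg _), Real.sqrt_sq (by positivity), div_div]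
        ring

/-- Limit synchronization error bound for controlled master–slave
synchronization of Lurie systems under a bounded transmission error: if the
passification relations hold and the transmission error is bounded by `Δ`, then
`limsup_{t→∞} ‖z(t) − x(t)‖ ≤ 2(|K| + L)·Δ·√(BᵀPB)/(μ·√(λ_min(P)))`,
where `‖·‖` is the Euclidean norm. -/
theorem controlled_sync_limit_error_bound {n : ℕ}
    (A : Matrix (Fin n) (Fin n) ℝ) (B C : Fin n → ℝ)
    (φ : ℝ → ℝ) (L : ℝ) (hL : 0 ≤ L)
    (hφ : ∀ y y' : ℝ, |φ y - φ y'| ≤ L * |y - y'|)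
    (P : Matrix (Fin n) (Fin n) ℝ) (μ K : ℝ)
    (hP : P.PosDef) (hμ : 0 < μ)
    (hLyap : ∀ v : Fin n → ℝ,
      v ⬝ᵥ (P * (A - K • vecMulVec B C) + (A - K • vecMulVec B C)ᵀ * P).mulVec v
        ≤ -μ * (v ⬝ᵥ P.mulVec v))
    (hPB : P.mulVec B = C)
    (ybar : ℝ → ℝ) (Δ : ℝ) (hΔ : 0 ≤ Δ)
    (x z : ℝ → Fin n → ℝ)
    (hx : ∀ t : ℝ, HasDerivAt x (A.mulVec (x t) + φ (C ⬝ᵥ x t) • B) t)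
    (hδ : ∀ t ≥ (0 : ℝ), |C ⬝ᵥ x t - ybar t| ≤ Δ)
    (hz : ∀ t : ℝ, HasDerivAt z
      (A.mulVec (z t) + φ (C ⬝ᵥ z t) • B
        + (-((K + L) * (C ⬝ᵥ z t - ybar t))) • B) t) :
    limsup (fun t => Real.sqrt (∑ i, (z t i - x t i) ^ 2)) atTop
      ≤ 2 * (|K| + L) * Δ * Real.sqrt (B ⬝ᵥ P.mulVec B)
        / (μ * Real.sqrt (⨅ i, hP.1.eigenvalues i)) :=
  controlled_sync_limit_error_bound_general A B C φ L hL hφ P μ K hP hμ hLyap hPB ybar Δ x z hx hδ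
    hz
end

section
/- Let A be a real n×n matrix, B a real n×1 matrix, C a real 1×n matrix, K ∈ ℝ, and set A_K := A − B K C. Suppose P is a real symmetric positive-definite n×n matrix such that P A_K + A_Kᵀ P is negative definite and P B = Cᵀ. Then for every e ∈ ℝⁿ with e ≠ 0 and every ξ ∈ ℝ with ξ·(C e) ≤ 0, one has 2 eᵀ P (A_K e + B ξ) < 0; that is, the quadratic Lyapunov function V(e) = eᵀ P e has strictly negative derivative along all directions A_K e + B ξ produced by sector-bounded feedback nonlinearities. -/
open Matrix

/-! With `PB = Cᵀ` the input term of the derivative is `2 ξ (Ce) ≤ 0`, while by the symmetry of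
`P` the state term `2 eᵀ P A_K e` is the quadratic form of `P A_K + A_Kᵀ P`, which is negative. -/

namespace Matrix

variable {ι R : Type*} [Fintype ι] [CommRing R]

theorem IsSymm.dotProduct_mul_add_transpose_mul_mulVec {P : Matrix ι ι R} (hP : P.IsSymm)
    (M : Matrix ι ι R) (e : ι → R) :
    e ⬝ᵥ (P * M + Mᵀ * P) *ᵥ e = 2 * (e ⬝ᵥ P *ᵥ (M *ᵥ e)) := by
  have htranspose : e ⬝ᵥ Mᵀ *ᵥ (P *ᵥ e) = e ⬝ᵥ P *ᵥ (M *ᵥ e) := by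
    rw [dotProduct_mulVec, vecMul_transpose, dotProduct_mulVec e P, ← mulVec_transpose, hP.eq,
      dotProduct_comm]
  rw [add_mulVec, dotProduct_add, ← mulVec_mulVec, ← mulVec_mulVec, htranspose]
  ring

theorem IsSymm.two_mul_dotProduct_mulVec_add_smul {P : Matrix ι ι R} (hP : P.IsSymm)
    {B C : ι → R} (hPB : P *ᵥ B = C) (M : Matrix ι ι R) (e : ι → R) (ξ : R) :
    2 * (e ⬝ᵥ P *ᵥ (M *ᵥ e + ξ • B)) = e ⬝ᵥ (P * M + Mᵀ * P) *ᵥ e + 2 * (ξ * (C ⬝ᵥ e)) := by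
  rw [hP.dotProduct_mul_add_transpose_mul_mulVec, mulVec_add, mulVec_smul, hPB, dotProduct_add,
    dotProduct_smul, smul_eq_mul, dotProduct_comm e C]
  ring

end Matrix

/-- Sufficiency: if `P > 0`, `P A_K + A_Kᵀ P` is negative definite and
`PB = Cᵀ`, then the quadratic Lyapunov function `V(e) = eᵀPe` has strictly
negative derivative `2eᵀP(A_K e + Bξ)` for every `e ≠ 0` and every
sector-bounded input `ξ` with `ξ·(Ce) ≤ 0`. -/
theorem quadratic_lyapunov_sector_sufficiency {n : ℕ}
    (A : Matrix (Fin n) (Fin n) ℝ) (B C : Fin n → ℝ) (K : ℝ)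
    (P : Matrix (Fin n) (Fin n) ℝ) (hP : P.PosDef)
    (hNeg : ∀ e : Fin n → ℝ, e ≠ 0 →
      e ⬝ᵥ (P * (A - K • vecMulVec B C) + (A - K • vecMulVec B C)ᵀ * P).mulVec e < 0)
    (hPB : P.mulVec B = C) :
    ∀ e : Fin n → ℝ, e ≠ 0 → ∀ ξ : ℝ, ξ * (C ⬝ᵥ e) ≤ 0 →
      2 * (e ⬝ᵥ P.mulVec ((A - K • vecMulVec B C).mulVec e + ξ • B)) < 0 := by
  intro e he ξ hξ
  have hPsymm : P.IsSymm := by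
    rw [IsSymm, ← conjTranspose_eq_transpose_of_trivial]
    exact hP.isHermitian
  rw [hPsymm.two_mul_dotProduct_mulVec_add_smul hPB]
  linarith [hNeg e he]
end
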